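/- arXiv:0902.1249 — 2 statements merged into one kernel-verified Lean document; each statement's English description precedes it below -/
import Mathlib

section
/- For the Möbius boost T_{τ₀}(z) = (cosh(τ₀/2) z + sinh(τ₀/2))/(sinh(τ₀/2) z + cosh(τ₀/2)) on the Poincaré disc, the hyperbolic distance satisfies cosh d_H(z, T_{τ₀}(z)) = 1 + 2 (|z²-1|²/(1-|z|²)²) sinh²(τ₀/2) for every z in the disc. -/
/-!
Write `c = cosh (τ/2)`, `s = sinh (τ/2)` and `w = s z + c`, which does not vanish on the disc since
`|s| < c`. Then `z - T z = s (z² - 1) / w`, and `c² - s² = 1` gives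
`1 - |T z|² = (1 - |z|²) / |w|²`, so the factors `|w|²` cancel in the distance formula.
-/

/-- Inverse hyperbolic cosine. -/
noncomputable def arcosh (x : ℝ) : ℝ := Real.log (x + Real.sqrt (x ^ 2 - 1))

/-- The hyperbolic distance on the Poincaré disc, defined by
`cosh (dH z z') = 1 + 2|z-z'|² / ((1-|z|²)(1-|z'|²))`. -/
noncomputable def dH (z z' : ℂ) : ℝ :=
  arcosh (1 + 2 * ‖z - z'‖ ^ 2 /
    ((1 - ‖z‖ ^ 2) * (1 - ‖z'‖ ^ 2)))

/-- The Möbius boost of parameter `τ` on the Poincaré disc. -/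
noncomputable def boost (τ : ℝ) (z : ℂ) : ℂ :=
  ((Real.cosh (τ / 2) : ℂ) * z + (Real.sinh (τ / 2) : ℂ)) /
    ((Real.sinh (τ / 2) : ℂ) * z + (Real.cosh (τ / 2) : ℂ))

theorem cosh_dH {z z' : ℂ} (hz : ‖z‖ < 1) (hz' : ‖z'‖ < 1) :
    Real.cosh (dH z z') = 1 + 2 * ‖z - z'‖ ^ 2 / ((1 - ‖z‖ ^ 2) * (1 - ‖z'‖ ^ 2)) := by
  have h : 0 < 1 - ‖z‖ ^ 2 := by nlinarith [norm_nonneg z]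
  have h' : 0 < 1 - ‖z'‖ ^ 2 := by nlinarith [norm_nonneg z']
  -- `arcosh` unfolds to Mathlib's `Real.arcosh`
  exact Real.cosh_arcosh (le_add_of_nonneg_right (by positivity))

/-- The identity behind the invariance of the disc under `z ↦ (c z + s) / (s z + c)` when
`c ^ 2 - s ^ 2 = 1`. -/
theorem normSq_add_sub_normSq_add (c s : ℝ) (z : ℂ) :
    Complex.normSq (s * z + c) - Complex.normSq (c * z + s) =
      (c ^ 2 - s ^ 2) * (1 - Complex.normSq z) := by
  simp only [Complex.normSq_apply, Complex.add_re, Complex.add_im, Complex.mul_re,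
    Complex.mul_im, Complex.ofReal_re, Complex.ofReal_im]
  ring

section Boost

variable (τ : ℝ) {z : ℂ}

theorem boost_denom_ne_zero (hz : ‖z‖ ≤ 1) :
    (Real.sinh (τ / 2) : ℂ) * z + Real.cosh (τ / 2) ≠ 0 := by
  intro h
  have hnorm : |Real.sinh (τ / 2)| * ‖z‖ = Real.cosh (τ / 2) := by
    rw [← Real.norm_eq_abs, ← Complex.norm_real, ← norm_mul, eq_neg_of_add_eq_zero_left h,
      norm_neg, Complex.norm_real, Real.norm_of_nonneg (Real.cosh_pos _).le]
  have hlt : |Real.sinh (τ / 2)| < Real.cosh (τ / 2) :=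
    abs_lt_of_sq_lt_sq (by linarith [Real.cosh_sq_sub_sinh_sq (τ / 2)]) (Real.cosh_pos _).le
  nlinarith [abs_nonneg (Real.sinh (τ / 2))]

theorem sub_boost (hz : ‖z‖ ≤ 1) :
    z - boost τ z = Real.sinh (τ / 2) * (z ^ 2 - 1) /
      ((Real.sinh (τ / 2) : ℂ) * z + Real.cosh (τ / 2)) := by
  have hd := boost_denom_ne_zero τ hz
  rw [boost, eq_div_iff hd, sub_mul, div_mul_cancel₀ _ hd]
  ring

theorem norm_sub_boost_sq (hz : ‖z‖ ≤ 1) :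
    ‖z - boost τ z‖ ^ 2 = Real.sinh (τ / 2) ^ 2 * ‖z ^ 2 - 1‖ ^ 2 /
      ‖(Real.sinh (τ / 2) : ℂ) * z + Real.cosh (τ / 2)‖ ^ 2 := by
  rw [sub_boost τ hz, norm_div, norm_mul, Complex.norm_real, Real.norm_eq_abs, div_pow, mul_pow,
    sq_abs]

theorem one_sub_norm_boost_sq (hz : ‖z‖ ≤ 1) :
    1 - ‖boost τ z‖ ^ 2 =
      (1 - ‖z‖ ^ 2) / ‖(Real.sinh (τ / 2) : ℂ) * z + Real.cosh (τ / 2)‖ ^ 2 := by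
  have hd : Complex.normSq ((Real.sinh (τ / 2) : ℂ) * z + Real.cosh (τ / 2)) ≠ 0 :=
    Complex.normSq_eq_zero.not.mpr (boost_denom_ne_zero τ hz)
  simp only [boost, norm_div, div_pow, Complex.sq_norm]
  rw [eq_div_iff hd, sub_mul, div_mul_cancel₀ _ hd, one_mul, normSq_add_sub_normSq_add,
    Real.cosh_sq_sub_sinh_sq, one_mul]

theorem norm_boost_lt_one (hz : ‖z‖ < 1) : ‖boost τ z‖ < 1 := by
  have hd := boost_denom_ne_zero τ hz.le
  have h : 0 < 1 - ‖z‖ ^ 2 := by nlinarith [norm_nonneg z]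
  have h' : 0 < 1 - ‖boost τ z‖ ^ 2 := by rw [one_sub_norm_boost_sq τ hz.le]; positivity
  nlinarith [norm_nonneg (boost τ z)]

end Boost

/-- For the boost `T_{τ₀}`, the hyperbolic distance satisfies
`cosh d_H(z, T_{τ₀}(z)) = 1 + 2 (|z²-1|²/(1-|z|²)²) sinh²(τ₀/2)`. -/
theorem cosh_dH_boost (τ₀ : ℝ) (z : ℂ) (hz : ‖z‖ < 1) :
    Real.cosh (dH z (boost τ₀ z)) =
      1 + 2 * (‖z ^ 2 - 1‖ ^ 2 / (1 - ‖z‖ ^ 2) ^ 2) *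
        Real.sinh (τ₀ / 2) ^ 2 := by
  have hd := norm_ne_zero_iff.mpr (boost_denom_ne_zero τ₀ hz.le)
  have h : 1 - ‖z‖ ^ 2 ≠ 0 := by nlinarith [norm_nonneg z]
  rw [cosh_dH hz (norm_boost_lt_one τ₀ hz), norm_sub_boost_sq τ₀ hz.le,
    one_sub_norm_boost_sq τ₀ hz.le]
  generalize ‖(Real.sinh (τ₀ / 2) : ℂ) * z + Real.cosh (τ₀ / 2)‖ = N at hd ⊢
  field_simp
end

section
/- Spectral lower bound for the windowed Fourier transform: let ψ(t,·) = Σ_q ⟨ψ₀, ψ_q⟩ cos(qt) ψ_q be a solution of the wave equation on a compact manifold expanded in an orthonormal eigenbasis (Δψ_q = -q²ψ_q), and define Ψ_ω = ∫₀ᵀ ψ(t,·) e^{iωt} dt. Then for an eigenvalue q₀ > 0 with coefficient c = ⟨ψ₀, ψ_{q₀}⟩, the squared L² norm ‖Ψ_{q₀}‖² is at least c² (T²/4 - T/(2q₀)). -/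
open MeasureTheory intervalIntegral

/-!
Since `cos (w t) e^{i w t} = 1/2 + e^{2 i w t}/2`, the integral over `[0, T]` equals
`T/2 + z` with `‖z‖ ≤ 1/(2w)`: the resonant mode contributes a term growing linearly
in `T`, and the oscillating remainder costs at most `2 · (T/2) · ‖z‖ ≤ T/(2w)` in the
square of the norm. The other modes only add nonnegative terms to the sum.
-/

theorem sq_norm_sub_two_mul_norm_mul_norm_le_norm_add_sq {𝕜 E : Type*} [RCLike 𝕜]
    [NormedAddCommGroup E] [InnerProductSpace 𝕜 E] (x y : E) :
    ‖x‖ ^ 2 - 2 * (‖x‖ * ‖y‖) ≤ ‖x + y‖ ^ 2 := by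
  have h := re_inner_le_norm (𝕜 := 𝕜) x (-y)
  rw [inner_neg_right, map_neg, norm_neg] at h
  rw [norm_add_sq (𝕜 := 𝕜)]
  nlinarith [sq_nonneg ‖y‖]

theorem Complex.cos_mul_exp_I_mul (θ : ℂ) :
    Complex.cos θ * Complex.exp (Complex.I * θ) =
      Complex.exp (2 * Complex.I * θ) / 2 + 1 / 2 := by
  rw [Complex.cos, div_mul_eq_mul_div, add_mul, ← Complex.exp_add, ← Complex.exp_add]
  ring_nf
  simp only [Complex.exp_zero]
  ring

theorem integral_cos_mul_exp_I_mul {w : ℝ} (hw : w ≠ 0) (T : ℝ) :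
    ∫ t in (0 : ℝ)..T, (Real.cos (w * t) : ℂ) * Complex.exp (Complex.I * (w * t)) =
      T / 2 + (Complex.exp (2 * Complex.I * w * T) - 1) / (4 * Complex.I * w) := by
  have hc : 2 * Complex.I * w ≠ 0 := by simp [hw]
  have hexp : Continuous fun t : ℝ => Complex.exp (2 * Complex.I * w * t) / 2 := by fun_prop
  simp_rw [Complex.ofReal_cos, Complex.ofReal_mul, Complex.cos_mul_exp_I_mul, ← mul_assoc]
  rw [integral_add (hexp.intervalIntegrable 0 T) intervalIntegrable_const,
    intervalIntegral.integral_div, integral_exp_mul_complex hc, intervalIntegral.integral_const,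
    Complex.ofReal_zero, mul_zero, Complex.exp_zero, sub_zero, Complex.real_smul]
  field_simp
  ring

theorem norm_exp_sub_one_div_le {w : ℝ} (hw : 0 < w) (T : ℝ) :
    ‖(Complex.exp (2 * Complex.I * w * T) - 1) / (4 * Complex.I * w)‖ ≤ 1 / (2 * w) := by
  have hnum : ‖Complex.exp (2 * Complex.I * w * T) - 1‖ ≤ 2 := by
    have hunit : ‖Complex.exp (2 * Complex.I * w * T)‖ = 1 := by
      rw [show 2 * Complex.I * w * T = ((2 * w * T : ℝ) : ℂ) * Complex.I by push_cast; ring]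
      exact Complex.norm_exp_ofReal_mul_I _
    linarith [norm_sub_le (Complex.exp (2 * Complex.I * w * T)) 1, hunit, norm_one (α := ℂ)]
  have hden : ‖4 * Complex.I * (w : ℂ)‖ = 4 * w := by simp [abs_of_pos hw]
  rw [norm_div, hden, div_le_div_iff₀ (by positivity) (by positivity)]
  nlinarith

theorem sq_sub_le_sq_norm_integral_cos_mul_exp_I_mul {w T : ℝ} (hw : 0 < w) (hT : 0 < T) :
    T ^ 2 / 4 - T / (2 * w) ≤
      ‖∫ t in (0 : ℝ)..T,
        (Real.cos (w * t) : ℂ) * Complex.exp (Complex.I * (w * t))‖ ^ 2 := by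
  set z := (Complex.exp (2 * Complex.I * w * T) - 1) / (4 * Complex.I * w)
  have hhalf : ‖(T : ℂ) / 2‖ = T / 2 := by
    rw [norm_div, Complex.norm_real, Real.norm_of_nonneg hT.le, Complex.norm_two]
  calc T ^ 2 / 4 - T / (2 * w) = (T / 2) ^ 2 - 2 * (T / 2 * (1 / (2 * w))) := by ring
    _ ≤ ‖(T : ℂ) / 2‖ ^ 2 - 2 * (‖(T : ℂ) / 2‖ * ‖z‖) := by
        rw [hhalf]
        gcongr
        exact norm_exp_sub_one_div_le hw T
    _ ≤ ‖(T : ℂ) / 2 + z‖ ^ 2 :=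
        sq_norm_sub_two_mul_norm_mul_norm_le_norm_add_sq (𝕜 := ℂ) _ _
    _ = _ := by rw [integral_cos_mul_exp_I_mul hw.ne']

/-- Spectral lower bound for the windowed Fourier transform of a wave on a
compact manifold.  Expanding the solution `ψ(t) = Σ_q ⟨ψ₀,ψ_q⟩ cos(qt) ψ_q` in
an orthonormal eigenbasis `(ψ_q)` of `-Δ_K` (eigenvalues `q²`), and setting
`Ψ_ω = ∫₀ᵀ ψ(t,·) e^{iωt} dt`, orthogonality gives
`‖Ψ_ω‖² = Σ_q ⟨ψ₀,ψ_q⟩² |∫₀ᵀ cos(qt) e^{iωt} dt|²`.  For an eigenvalue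
`q₀ > 0` with coefficient `c = ⟨ψ₀, ψ_{q₀}⟩`, taking `ω = q₀`:
`‖Ψ_{q₀}‖² ≥ c² (T²/4 - T/(2q₀))`. -/
theorem windowed_fourier_lower_bound
    {ι : Type*} (c : ι → ℝ) (q : ι → ℝ) (i₀ : ι) (hq₀ : 0 < q i₀)
    (T : ℝ) (hT : 0 < T)
    (hsum : Summable fun i =>
      c i ^ 2 * ‖∫ t in (0 : ℝ)..T,
        (Real.cos (q i * t) : ℂ) * Complex.exp (Complex.I * (q i₀ * t))‖ ^ 2) :
    c i₀ ^ 2 * (T ^ 2 / 4 - T / (2 * q i₀)) ≤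
      ∑' i, c i ^ 2 * ‖∫ t in (0 : ℝ)..T,
        (Real.cos (q i * t) : ℂ) * Complex.exp (Complex.I * (q i₀ * t))‖ ^ 2 :=
  calc c i₀ ^ 2 * (T ^ 2 / 4 - T / (2 * q i₀))
      _ ≤ c i₀ ^ 2 * ‖∫ t in (0 : ℝ)..T,
            (Real.cos (q i₀ * t) : ℂ) * Complex.exp (Complex.I * (q i₀ * t))‖ ^ 2 :=
        mul_le_mul_of_nonneg_left (sq_sub_le_sq_norm_integral_cos_mul_exp_I_mul hq₀ hT)
          (sq_nonneg _)
      _ ≤ _ := hsum.le_tsum i₀ fun i _ => by positivity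
end
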